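/- arXiv:1303.1890 — 5 statements merged into one kernel-verified Lean document; each statement's English description precedes it below -/
import Mathlib

section
/- For x, y ∈ [0,1] with x + y = c for a fixed constant c ∈ [0,1], the function E₀(x,y) = xy·log(xy) + (1-x)(1-y)·log((1-x)(1-y)) (with the convention 0·log 0 = 0) is minimized (i.e., the corresponding entropy contribution -E₀ is maximized) when x = y = c/2. -/
/-- E₀(x,y) = xy·log(xy) + (1-x)(1-y)·log((1-x)(1-y)).
Note `Real.log 0 = 0` in Mathlib, so the convention `t·log t = 0` at `t = 0` holds. -/
noncomputable def E0 (x y : ℝ) : ℝ :=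
  x * y * Real.log (x * y) + (1 - x) * (1 - y) * Real.log ((1 - x) * (1 - y))

/-!
With `p = x * y` and `x + y = c` one has `(1 - x) * (1 - y) = (1 - c) + p`, so
`E0 x y = g p` where `g p = p log p + (a + p) log (a + p)` and `a = 1 - c ≥ 0`.
By AM-GM `p ≤ (c / 2) ^ 2`, with equality at `x = y = c / 2`, so it suffices that `g` is
antitone on `[0, (c / 2) ^ 2]`. There `g' p = log (p (a + p)) + 2`, and
`p (a + p) ≤ (c / 2 · (1 - c / 2)) ^ 2 ≤ 1 / 16 < e⁻²`.
-/

open Real Set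

lemma inv_sixteen_le_exp_neg_two : (16 : ℝ)⁻¹ ≤ exp (-2) := by
  have h2 : exp 2 = exp 1 * exp 1 := by rw [← exp_add]; norm_num
  have h16 : exp 2 ≤ 16 := by nlinarith [exp_one_lt_three, exp_pos 1]
  rw [exp_neg]
  exact inv_anti₀ (exp_pos 2) h16

lemma antitoneOn_mul_log_add_mul_log_const_add {a b : ℝ} (ha : 0 ≤ a)
    (hb : b * (a + b) ≤ exp (-2)) :
    AntitoneOn (fun p ↦ p * log p + (a + p) * log (a + p)) (Icc 0 b) := by
  refine antitoneOn_of_hasDerivWithinAt_nonpos (convex_Icc 0 b)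
    (f' := fun p ↦ log p + 1 + (log (a + p) + 1)) ?_ ?_ ?_
  · exact (continuous_mul_log.add
      (continuous_mul_log.comp (continuous_const_add a))).continuousOn
  · intro p hp
    rw [interior_Icc] at hp
    have hap : a + p ≠ 0 := by linarith [hp.1]
    exact ((hasDerivAt_mul_log hp.1.ne').add
      ((hasDerivAt_mul_log hap).comp_const_add a p)).hasDerivWithinAt
  · intro p hp
    rw [interior_Icc] at hp
    obtain ⟨hp0, hpb⟩ := hp
    have hprod : p * (a + p) ≤ exp (-2) :=
      (mul_le_mul hpb.le (by linarith) (by linarith) (by linarith)).trans hb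
    have hlog : log p + log (a + p) ≤ -2 := by
      rw [← log_mul hp0.ne' (by linarith)]
      exact (log_le_iff_le_exp (by positivity)).2 hprod
    linarith

lemma E0_eq_of_add_eq {x y c : ℝ} (h : x + y = c) :
    E0 x y = x * y * log (x * y) + (1 - c + x * y) * log (1 - c + x * y) := by
  rw [E0, show (1 - x) * (1 - y) = 1 - c + x * y by rw [← h]; ring]

theorem E0_min_at_equal (c : ℝ) (hc : c ∈ Set.Icc (0 : ℝ) 1)
    (x y : ℝ) (hx : x ∈ Set.Icc (0 : ℝ) 1) (hy : y ∈ Set.Icc (0 : ℝ) 1)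
    (hxy : x + y = c) :
    E0 (c / 2) (c / 2) ≤ E0 x y := by
  obtain ⟨hc0, hc1⟩ := hc
  have hp : x * y ≤ c / 2 * (c / 2) := by nlinarith [sq_nonneg (x - y)]
  have hbound : c / 2 * (c / 2) * (1 - c + c / 2 * (c / 2)) ≤ exp (-2) :=
    calc c / 2 * (c / 2) * (1 - c + c / 2 * (c / 2)) = (c / 2 * (1 - c / 2)) ^ 2 := by ring
      _ ≤ (1 / 4) ^ 2 :=
        pow_le_pow_left₀ (by nlinarith) (by nlinarith [sq_nonneg (c - 1)]) 2
      _ = 16⁻¹ := by norm_num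
      _ ≤ exp (-2) := inv_sixteen_le_exp_neg_two
  rw [E0_eq_of_add_eq hxy, E0_eq_of_add_eq (add_halves c)]
  exact antitoneOn_mul_log_add_mul_log_const_add (sub_nonneg.2 hc1) hbound
    ⟨mul_nonneg hx.1 hy.1, hp⟩ ⟨by positivity, le_rfl⟩ hp
end

section
/- The Shannon entropy of any probability distribution of the form (p·q, (1-p)(1-q), p(1-q) + (1-p)q), obtained by the componentwise structure of a product of two binary distributions (p, 1-p) and (q, 1-q), is at most (3/2)·log 2. -/
/-!
Comparing `(pq, (1-p)(1-q), p(1-q) + (1-p)q)` with the binomial distribution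
`(m², (1-m)², 2m(1-m))`, where `m = (p+q)/2`, Gibbs' inequality bounds the entropy by
`2 h(m) - c log 2`, with `h` the binary entropy and `c = p(1-q) + (1-p)q ≥ 2m(1-m)`.
Since `h(m) ≤ log 2 - (m - 1/2)²` and `log 2 < 1`, this is at most `(3/2) log 2`,
with equality at `m = 1/2`.
-/

open Real

lemma negMulLog_le_neg_mul_log_add_sub {P Q : ℝ} (hP : 0 ≤ P) (hQ : 0 < Q) :
    negMulLog P ≤ -(P * log Q) + Q - P :=
  calc negMulLog P = negMulLog (Q * (P / Q)) := by rw [mul_div_cancel₀ _ hQ.ne']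
    _ = P / Q * negMulLog Q + Q * negMulLog (P / Q) := negMulLog_mul _ _
    _ ≤ P / Q * negMulLog Q + Q * (1 - P / Q) := by
      gcongr; exact negMulLog_le_one_sub_self (div_nonneg hP hQ.le)
    _ = -(P * log Q) + Q - P := by rw [negMulLog]; field_simp; ring

lemma negMulLog_le_one_sub_sq_div_two {x : ℝ} (h0 : 0 ≤ x) (h1 : x ≤ 1) :
    negMulLog x ≤ (1 - x ^ 2) / 2 := by
  rcases h0.eq_or_lt with rfl | hx
  · norm_num
  have hlog : (x - x⁻¹) / 2 ≤ log x := by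
    rw [← sinh_log hx]; exact sinh_le_self_iff.2 (log_nonpos h0 h1)
  calc negMulLog x = -(x * log x) := by rw [negMulLog, neg_mul]
    _ ≤ -(x * ((x - x⁻¹) / 2)) := by gcongr
    _ = (1 - x ^ 2) / 2 := by field_simp; ring

lemma binEntropy_le_log_two_sub_sq_of_le_half {m : ℝ} (h0 : 0 ≤ m) (h1 : m ≤ 2⁻¹) :
    binEntropy m ≤ log 2 - (m - 2⁻¹) ^ 2 := by
  have h2 : negMulLog 2 = -(2 * log 2) := by rw [negMulLog, neg_mul]
  have hm := negMulLog_le_one_sub_sq_div_two (x := 2 * m) (by linarith) (by linarith)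
  have hm' := negMulLog_le_one_sub_self (x := 2 * (1 - m)) (by linarith)
  rw [negMulLog_mul, h2] at hm hm'
  rw [binEntropy_eq_negMulLog_add_negMulLog_one_sub]
  linarith

lemma binEntropy_le_log_two_sub_sq {m : ℝ} (h0 : 0 ≤ m) (h1 : m ≤ 1) :
    binEntropy m ≤ log 2 - (m - 2⁻¹) ^ 2 := by
  rcases le_total m 2⁻¹ with h | h
  · exact binEntropy_le_log_two_sub_sq_of_le_half h0 h
  · have h' := binEntropy_le_log_two_sub_sq_of_le_half (m := 1 - m) (by linarith) (by linarith)
    rw [binEntropy_one_sub] at h'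
    linarith

lemma negMulLog_add_negMulLog_add_negMulLog_le {a b c m : ℝ} (ha : 0 ≤ a) (hb : 0 ≤ b)
    (hc : 0 ≤ c) (hm0 : 0 < m) (hm1 : m < 1) (hac : 2 * a + c = 2 * m)
    (hbc : 2 * b + c = 2 * (1 - m)) :
    negMulLog a + negMulLog b + negMulLog c ≤ 2 * binEntropy m - c * log 2 := by
  have hm1' : 0 < 1 - m := by linarith
  have ga := negMulLog_le_neg_mul_log_add_sub ha (pow_pos hm0 2)
  have gb := negMulLog_le_neg_mul_log_add_sub hb (pow_pos hm1' 2)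
  have gc := negMulLog_le_neg_mul_log_add_sub hc (by positivity : 0 < 2 * m * (1 - m))
  rw [log_pow] at ga gb
  rw [log_mul (by positivity) hm1'.ne', log_mul two_ne_zero hm0.ne'] at gc
  rw [binEntropy, log_inv, log_inv]
  linear_combination ga + gb + gc - log m * hac - log (1 - m) * hbc - (hac + hbc) / 2

lemma two_mul_binEntropy_sub_mul_log_two_le {m c : ℝ} (h0 : 0 ≤ m) (h1 : m ≤ 1)
    (hc : 2 * m * (1 - m) ≤ c) :
    2 * binEntropy m - c * log 2 ≤ 3 / 2 * log 2 := by
  have hbin := binEntropy_le_log_two_sub_sq h0 h1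
  have hlog : log 2 < 1 := log_two_lt_d9.trans (by norm_num)
  nlinarith [mul_le_mul_of_nonneg_right hc (log_pos one_lt_two).le,
    mul_nonneg (sq_nonneg (m - 2⁻¹)) (sub_nonneg.2 hlog.le)]

theorem entropy_product_binary_le (p q : ℝ) (hp : p ∈ Set.Icc (0 : ℝ) 1)
    (hq : q ∈ Set.Icc (0 : ℝ) 1) :
    -(p * q * Real.log (p * q)
        + (1 - p) * (1 - q) * Real.log ((1 - p) * (1 - q))
        + (p * (1 - q) + (1 - p) * q) * Real.log (p * (1 - q) + (1 - p) * q))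
      ≤ (3 / 2) * Real.log 2 := by
  obtain ⟨hp0, hp1⟩ := hp
  obtain ⟨hq0, hq1⟩ := hq
  rcases (add_nonneg hp0 hq0).eq_or_lt with h0 | h0
  · obtain ⟨rfl, rfl⟩ : p = 0 ∧ q = 0 := ⟨by linarith, by linarith⟩
    norm_num; positivity
  rcases (add_le_add hp1 hq1).eq_or_lt with h2 | h2
  · obtain ⟨rfl, rfl⟩ : p = 1 ∧ q = 1 := ⟨by linarith, by linarith⟩
    norm_num; positivity
  set m := (p + q) / 2 with hm
  have hH := negMulLog_add_negMulLog_add_negMulLog_le (a := p * q) (b := (1 - p) * (1 - q))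
    (c := p * (1 - q) + (1 - p) * q) (m := m)
    (by positivity) (by nlinarith) (by nlinarith) (by linarith) (by linarith) (by ring) (by ring)
  have hc : 2 * m * (1 - m) ≤ p * (1 - q) + (1 - p) * q := by nlinarith [sq_nonneg (p - q)]
  have hbound := two_mul_binEntropy_sub_mul_log_two_le (by positivity) (by linarith) hc
  simp only [negMulLog_eq_neg] at hH
  linarith
end

section
/- For the Moran process with neutral fitness and boundary mutation regime, the stationary distribution is given by s₀ = s_N = (2 + μN² Σᵢ₌₁^{N-1} 1/(i(N-i)))⁻¹ and s_j = s₀ · μN²/(j(N-j)) for 1 ≤ j ≤ N-1; i.e., this vector is a probability distribution satisfying the detailed balance conditions s_i T_{i→i+1} = s_{i+1} T_{i+1→i}. -/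
open Finset

/-- Stationary distribution of the neutral Moran process with boundary mutations. -/
noncomputable def moranBoundaryStat (N : ℕ) (μ : ℝ) (j : ℕ) : ℝ :=
  if j = 0 ∨ j = N then
    (2 + μ * (N : ℝ) ^ 2 * ∑ i ∈ Ico 1 N, 1 / ((i : ℝ) * ((N : ℝ) - i)))⁻¹
  else
    (2 + μ * (N : ℝ) ^ 2 * ∑ i ∈ Ico 1 N, 1 / ((i : ℝ) * ((N : ℝ) - i)))⁻¹
      * (μ * (N : ℝ) ^ 2 / ((j : ℝ) * ((N : ℝ) - j)))

/-- Up-transition probability T_{i→i+1} of the neutral boundary-mutation Moran process. -/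
noncomputable def moranBoundaryUp (N : ℕ) (μ : ℝ) (i : ℕ) : ℝ :=
  if i = 0 then μ else (i : ℝ) * ((N : ℝ) - i) / (N : ℝ) ^ 2

/-- Down-transition probability T_{i→i-1} of the neutral boundary-mutation Moran process. -/
noncomputable def moranBoundaryDown (N : ℕ) (μ : ℝ) (i : ℕ) : ℝ :=
  if i = N then μ else (i : ℝ) * ((N : ℝ) - i) / (N : ℝ) ^ 2

/-!
The probability flux `s_j T_{j→j±1}` equals the same constant `s₀ μ` at every state: at the
boundary the rate is `μ`, and in the interior the factor `μ N² / (j (N - j))` of `s_j` cancels the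
neutral drift rate `j (N - j) / N²`. Detailed balance follows at once, and `s₀` is by construction
the reciprocal of the total weight `2 + μ N² ∑ 1 / (i (N - i))`.
-/

noncomputable def moranBoundaryPartition (N : ℕ) (μ : ℝ) : ℝ :=
  2 + μ * (N : ℝ) ^ 2 * ∑ i ∈ Ico 1 N, 1 / ((i : ℝ) * ((N : ℝ) - i))

lemma cast_mul_cast_sub_pos {i N : ℕ} (hi₀ : 0 < i) (hiN : i < N) :
    (0 : ℝ) < i * ((N : ℝ) - i) :=
  mul_pos (Nat.cast_pos.2 hi₀) (sub_pos.2 (Nat.cast_lt.2 hiN))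

section

variable {N : ℕ} {μ : ℝ}

lemma moranBoundaryPartition_pos (hμ : 0 ≤ μ) : 0 < moranBoundaryPartition N μ := by
  have hsum : 0 ≤ ∑ i ∈ Ico 1 N, 1 / ((i : ℝ) * ((N : ℝ) - i)) :=
    sum_nonneg fun i hi ↦ (one_div_pos.2 <|
      cast_mul_cast_sub_pos (mem_Ico.1 hi).1 (mem_Ico.1 hi).2).le
  unfold moranBoundaryPartition
  positivity

lemma moranBoundaryStat_of_boundary {j : ℕ} (hj : j = 0 ∨ j = N) :
    moranBoundaryStat N μ j = (moranBoundaryPartition N μ)⁻¹ :=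
  if_pos hj

lemma moranBoundaryStat_of_interior {j : ℕ} (hj₀ : 0 < j) (hjN : j < N) :
    moranBoundaryStat N μ j =
      (moranBoundaryPartition N μ)⁻¹ * (μ * (N : ℝ) ^ 2 / ((j : ℝ) * ((N : ℝ) - j))) :=
  if_neg (by omega)

lemma moranBoundaryStat_nonneg (hμ : 0 ≤ μ) {j : ℕ} (hj : j ≤ N) :
    0 ≤ moranBoundaryStat N μ j := by
  have hZ := moranBoundaryPartition_pos (N := N) hμ
  rcases Nat.eq_zero_or_pos j with rfl | hj₀
  · rw [moranBoundaryStat_of_boundary (Or.inl rfl)]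
    positivity
  rcases hj.lt_or_eq with hjN | rfl
  · have := cast_mul_cast_sub_pos hj₀ hjN
    rw [moranBoundaryStat_of_interior hj₀ hjN]
    positivity
  · rw [moranBoundaryStat_of_boundary (Or.inr rfl)]
    positivity

lemma sum_moranBoundaryStat (hμ : 0 ≤ μ) (hN : 1 ≤ N) :
    ∑ j ∈ range (N + 1), moranBoundaryStat N μ j = 1 := by
  have hinterior : ∑ j ∈ Ico 1 N, moranBoundaryStat N μ j =
      (moranBoundaryPartition N μ)⁻¹ *
        (μ * (N : ℝ) ^ 2 * ∑ i ∈ Ico 1 N, 1 / ((i : ℝ) * ((N : ℝ) - i))) := by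
    rw [mul_sum, mul_sum]
    refine sum_congr rfl fun j hj ↦ ?_
    rw [moranBoundaryStat_of_interior (mem_Ico.1 hj).1 (mem_Ico.1 hj).2, mul_one_div]
  rw [sum_range_succ, range_eq_Ico, sum_eq_sum_Ico_succ_bot (by omega), hinterior,
    moranBoundaryStat_of_boundary (Or.inl rfl), moranBoundaryStat_of_boundary (Or.inr rfl)]
  have hZ := (moranBoundaryPartition_pos (N := N) hμ).ne'
  field_simp
  unfold moranBoundaryPartition
  ring

lemma moranBoundaryStat_mul_rate {j : ℕ} (hj₀ : 0 < j) (hjN : j < N) :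
    moranBoundaryStat N μ j * ((j : ℝ) * ((N : ℝ) - j) / (N : ℝ) ^ 2) =
      (moranBoundaryPartition N μ)⁻¹ * μ := by
  have hj : (j : ℝ) ≠ 0 := Nat.cast_ne_zero.2 hj₀.ne'
  have hNj : (N : ℝ) - j ≠ 0 := sub_ne_zero.2 (Nat.cast_injective.ne hjN.ne')
  have hN : (N : ℝ) ≠ 0 := Nat.cast_ne_zero.2 (by omega)
  rw [moranBoundaryStat_of_interior hj₀ hjN, mul_assoc]
  congr 1
  field_simp

lemma moranBoundaryStat_mul_up {i : ℕ} (hi : i < N) :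
    moranBoundaryStat N μ i * moranBoundaryUp N μ i = (moranBoundaryPartition N μ)⁻¹ * μ := by
  unfold moranBoundaryUp
  split_ifs with hi₀
  · rw [moranBoundaryStat_of_boundary (Or.inl hi₀)]
  · exact moranBoundaryStat_mul_rate (Nat.pos_of_ne_zero hi₀) hi

lemma moranBoundaryStat_mul_down {i : ℕ} (hi₀ : 0 < i) (hi : i ≤ N) :
    moranBoundaryStat N μ i * moranBoundaryDown N μ i =
      (moranBoundaryPartition N μ)⁻¹ * μ := by
  unfold moranBoundaryDown
  split_ifs with hiN
  · rw [moranBoundaryStat_of_boundary (Or.inr hiN)]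
  · exact moranBoundaryStat_mul_rate hi₀ (lt_of_le_of_ne hi hiN)

end

theorem moranBoundary_stationary (N : ℕ) (hN : 2 ≤ N) (μ : ℝ)
    (hμ : μ ∈ Set.Ioo (0 : ℝ) 1) :
    (∀ j ≤ N, 0 ≤ moranBoundaryStat N μ j) ∧
    (∑ j ∈ range (N + 1), moranBoundaryStat N μ j) = 1 ∧
    (∀ i < N, moranBoundaryStat N μ i * moranBoundaryUp N μ i
        = moranBoundaryStat N μ (i + 1) * moranBoundaryDown N μ (i + 1)) :=
  ⟨fun _ hj ↦ moranBoundaryStat_nonneg hμ.1.le hj,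
    sum_moranBoundaryStat hμ.1.le (by omega),
    fun _ hi ↦ (moranBoundaryStat_mul_up hi).trans
      (moranBoundaryStat_mul_down (Nat.succ_pos _) hi).symm⟩
end

section
/- Entropy rate bound for the generalized Moran (incentive) process: every transition row has Shannon entropy at most (3/2)·log 2, hence the entropy rate is at most (3/2)·log 2, regardless of incentive functions, mutation rates, or population size. -/
open Finset

/-- Shannon entropy of a triple (natural log, with Real.log 0 = 0). -/
noncomputable def H3 (a b c : ℝ) : ℝ :=
  -(a * Real.log a + b * Real.log b + c * Real.log c)

/-- Probability of an A-reproduction event in the incentive process. -/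
noncomputable def pInc (N : ℕ) (φA φB μAB μBA : ℕ → ℝ) (i : ℕ) : ℝ :=
  (φA i * (1 - μAB i) + φB i * μBA (N - i)) / (φA i + φB i)

/-- Shannon entropy of the transition row (T_{i→i+1}, T_{i→i-1}, T_{i→i}) of the
incentive process. -/
noncomputable def incRowEntropy (N : ℕ) (φA φB μAB μBA : ℕ → ℝ) (i : ℕ) : ℝ :=
  H3 (pInc N φA φB μAB μBA i * (((N : ℝ) - i) / N))
    ((1 - pInc N φA φB μAB μBA i) * ((i : ℝ) / N))
    (1 - pInc N φA φB μAB μBA i * (((N : ℝ) - i) / N)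
       - (1 - pInc N φA φB μAB μBA i) * ((i : ℝ) / N))

/-!
The three transition probabilities have the form `a = p x`, `b = (1 - p)(1 - x)`,
`c = 1 - a - b` with `p, x ∈ [0, 1]`, so `√a + √b ≤ 1` by AM–GM. Write `a = s²`, `b = r²`.
Since `negMulLog (s²) = 2 s · negMulLog s`, the entropy splits as
`½ (negMulLog a + negMulLog b) + (s · negMulLog s + r · negMulLog r + negMulLog c)`.
The tangent line of `negMulLog` at `½` bounds the bracket by `log 2 + (s + r - 1) / 2`, and
the tangent line of `s ↦ negMulLog (s²)` at `½` bounds `negMulLog a + negMulLog b` by `log 2`.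
Both bounds are attained at `(a, b, c) = (¼, ¼, ½)`.
-/

open Real

lemma H3_eq_negMulLog (a b c : ℝ) : H3 a b c = negMulLog a + negMulLog b + negMulLog c := by
  simp only [H3, negMulLog_eq_neg]; ring

lemma negMulLog_le_tangent_half {x : ℝ} (hx : 0 ≤ x) :
    negMulLog x ≤ x * log 2 + (1 / 2 - x) := by
  have hsplit : negMulLog x = negMulLog (2 * x) / 2 + x * log 2 := by
    have h := negMulLog_mul (2 * x) (1 / 2)
    have hhalf : negMulLog (1 / 2) = log 2 / 2 := by rw [negMulLog, one_div, log_inv]; ring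
    rw [show 2 * x * (1 / 2) = x by ring] at h
    rw [h, hhalf]; ring
  have := negMulLog_le_one_sub_self (by positivity : 0 ≤ 2 * x)
  linarith

lemma negMulLog_sq (s : ℝ) : negMulLog (s ^ 2) = 2 * s * negMulLog s := by
  rw [sq, negMulLog_mul]; ring

lemma negMulLog_sq_le {s : ℝ} (hs : 0 ≤ s) :
    negMulLog (s ^ 2) ≤ log 2 / 2 + (2 * log 2 - 1) * (s - 1 / 2) := by
  have h := mul_le_mul_of_nonneg_left (negMulLog_le_tangent_half hs) (by positivity : 0 ≤ 2 * s)
  have hgap : 0 ≤ (1 - log 2) * (s - 1 / 2) ^ 2 :=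
    mul_nonneg (by linarith [log_two_lt_d9]) (sq_nonneg _)
  rw [negMulLog_sq]
  linarith

lemma negMulLog_sq_add_negMulLog_sq_le {s r : ℝ} (hs : 0 ≤ s) (hr : 0 ≤ r) (hsr : s + r ≤ 1) :
    negMulLog (s ^ 2) + negMulLog (r ^ 2) ≤ log 2 := by
  have hslope : (2 * log 2 - 1) * (s + r - 1) ≤ 0 :=
    mul_nonpos_of_nonneg_of_nonpos (by linarith [log_two_gt_d9]) (by linarith)
  linarith [negMulLog_sq_le hs, negMulLog_sq_le hr]

lemma H3_sq_sq_le {s r : ℝ} (hs : 0 ≤ s) (hr : 0 ≤ r) (hsr : s + r ≤ 1) :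
    H3 (s ^ 2) (r ^ 2) (1 - s ^ 2 - r ^ 2) ≤ 3 / 2 * log 2 := by
  have hc : 0 ≤ 1 - s ^ 2 - r ^ 2 := by nlinarith
  have hpair := negMulLog_sq_add_negMulLog_sq_le hs hr hsr
  have hs' := mul_le_mul_of_nonneg_left (negMulLog_le_tangent_half hs) hs
  have hr' := mul_le_mul_of_nonneg_left (negMulLog_le_tangent_half hr) hr
  have hc' := negMulLog_le_tangent_half hc
  rw [H3_eq_negMulLog]
  simp only [negMulLog_sq] at hpair ⊢
  linarith

lemma H3_le_of_sqrt_add_sqrt_le_one {a b : ℝ} (ha : 0 ≤ a) (hb : 0 ≤ b) (hab : √a + √b ≤ 1) :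
    H3 a b (1 - a - b) ≤ 3 / 2 * log 2 := by
  simpa only [sq_sqrt ha, sq_sqrt hb] using H3_sq_sq_le (sqrt_nonneg a) (sqrt_nonneg b) hab

lemma sqrt_mul_le_half_add {x y : ℝ} (hx : 0 ≤ x) (hy : 0 ≤ y) : √(x * y) ≤ (x + y) / 2 :=
  (sqrt_le_left (by positivity)).2 (by nlinarith [sq_nonneg (x - y)])

lemma H3_mul_le {p x : ℝ} (hp : p ∈ Set.Icc (0 : ℝ) 1) (hx : x ∈ Set.Icc (0 : ℝ) 1) :
    H3 (p * x) ((1 - p) * (1 - x)) (1 - p * x - (1 - p) * (1 - x)) ≤ 3 / 2 * log 2 := by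
  obtain ⟨hp0, hp1⟩ := hp
  obtain ⟨hx0, hx1⟩ := hx
  apply H3_le_of_sqrt_add_sqrt_le_one (by positivity) (mul_nonneg (by linarith) (by linarith))
  linarith [sqrt_mul_le_half_add hp0 hx0,
    sqrt_mul_le_half_add (by linarith : 0 ≤ 1 - p) (by linarith : 0 ≤ 1 - x)]

lemma div_add_mem_Icc_of_mem_Icc {α β u v : ℝ} (hα : 0 ≤ α) (hβ : 0 ≤ β)
    (hu : u ∈ Set.Icc (0 : ℝ) 1) (hv : v ∈ Set.Icc (0 : ℝ) 1) :
    (α * u + β * v) / (α + β) ∈ Set.Icc (0 : ℝ) 1 := by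
  obtain ⟨hu0, hu1⟩ := hu
  obtain ⟨hv0, hv1⟩ := hv
  exact ⟨by positivity, div_le_one_of_le₀ (by nlinarith) (by positivity)⟩

lemma pInc_mem_Icc {N : ℕ} {φA φB μAB μBA : ℕ → ℝ} {i : ℕ} (hφA : 0 ≤ φA i) (hφB : 0 ≤ φB i)
    (hμAB : μAB i ∈ Set.Icc (0 : ℝ) 1) (hμBA : μBA (N - i) ∈ Set.Icc (0 : ℝ) 1) :
    pInc N φA φB μAB μBA i ∈ Set.Icc (0 : ℝ) 1 :=
  div_add_mem_Icc_of_mem_Icc hφA hφB ⟨by linarith [hμAB.2], by linarith [hμAB.1]⟩ hμBA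

lemma incRowEntropy_le {N : ℕ} {φA φB μAB μBA : ℕ → ℝ} {i : ℕ} (hN : 0 < N) (hi : i ≤ N)
    (hp : pInc N φA φB μAB μBA i ∈ Set.Icc (0 : ℝ) 1) :
    incRowEntropy N φA φB μAB μBA i ≤ 3 / 2 * log 2 := by
  have hNR : (0 : ℝ) < N := by exact_mod_cast hN
  have hiR : (i : ℝ) ≤ N := by exact_mod_cast hi
  have hx : ((N : ℝ) - i) / N ∈ Set.Icc (0 : ℝ) 1 :=
    ⟨div_nonneg (by linarith) hNR.le, div_le_one_of_le₀ (by linarith) hNR.le⟩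
  have hcompl : (i : ℝ) / N = 1 - ((N : ℝ) - i) / N := by field_simp; ring
  rw [incRowEntropy, hcompl]
  exact H3_mul_le hp hx

theorem incentive_entropyRate_le_general (N : ℕ) (φA φB μAB μBA : ℕ → ℝ)
    (hφA : ∀ i, 1 ≤ i → i ≤ N - 1 → 0 < φA i)
    (hφB : ∀ i, 1 ≤ i → i ≤ N - 1 → 0 < φB i)
    (hμAB : ∀ i, μAB i ∈ Set.Icc (0 : ℝ) 1)
    (hμBA : ∀ i, μBA i ∈ Set.Icc (0 : ℝ) 1) :
    (∀ i, 1 ≤ i → i ≤ N - 1 →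
      incRowEntropy N φA φB μAB μBA i ≤ (3 / 2) * Real.log 2) ∧
    (∀ s : ℕ → ℝ, (∀ i, 0 ≤ s i) → (∑ i ∈ Ico 1 N, s i) = 1 →
      ∑ i ∈ Ico 1 N, s i * incRowEntropy N φA φB μAB μBA i ≤ (3 / 2) * Real.log 2) := by
  have row : ∀ i, 1 ≤ i → i ≤ N - 1 →
      incRowEntropy N φA φB μAB μBA i ≤ 3 / 2 * log 2 := fun i hi1 hi2 =>
    incRowEntropy_le (by omega) (by omega)
      (pInc_mem_Icc (hφA i hi1 hi2).le (hφB i hi1 hi2).le (hμAB i) (hμBA (N - i)))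
  refine ⟨row, fun s hs hsum => ?_⟩
  calc ∑ i ∈ Ico 1 N, s i * incRowEntropy N φA φB μAB μBA i
      ≤ ∑ i ∈ Ico 1 N, s i * (3 / 2 * log 2) := by
        refine sum_le_sum fun i hi => mul_le_mul_of_nonneg_left ?_ (hs i)
        obtain ⟨hi1, hiN⟩ := mem_Ico.1 hi
        exact row i hi1 (by omega)
    _ = 3 / 2 * log 2 := by rw [← sum_mul, hsum, one_mul]

theorem incentive_entropyRate_le (N : ℕ) (hN : 2 ≤ N) (φA φB μAB μBA : ℕ → ℝ)
    (hφA : ∀ i, 1 ≤ i → i ≤ N - 1 → 0 < φA i)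
    (hφB : ∀ i, 1 ≤ i → i ≤ N - 1 → 0 < φB i)
    (hμAB : ∀ i, μAB i ∈ Set.Icc (0 : ℝ) 1)
    (hμBA : ∀ i, μBA i ∈ Set.Icc (0 : ℝ) 1) :
    (∀ i, 1 ≤ i → i ≤ N - 1 →
      incRowEntropy N φA φB μAB μBA i ≤ (3 / 2) * Real.log 2) ∧
    (∀ s : ℕ → ℝ, (∀ i, 0 ≤ s i) → (∑ i ∈ Ico 1 N, s i) = 1 →
      ∑ i ∈ Ico 1 N, s i * incRowEntropy N φA φB μAB μBA i ≤ (3 / 2) * Real.log 2) :=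
  incentive_entropyRate_le_general N φA φB μAB μBA hφA hφB hμAB hμBA
end

section
/- For the tridiagonal boundary-mutation Moran process over the neutral landscape with asymmetric mutation rates μ_{AB} and μ_{BA} = k·μ_{AB}, the stationary distribution is s₀ = (1 + μ_{AB}N² Σᵢ₌₁^{N-1} 1/(i(N-i)) + 1/k)⁻¹, s_j = s₀·μ_{AB}N²/(j(N-j)) for 1 ≤ j ≤ N-1, and s_N = s₀/k. -/
/-!
Up to the normalising factor `s₀`, the claimed distribution is the weight vector
`w₀ = 1`, `w_j = μ_{AB} N² / (j (N - j))`, `w_N = 1 / k`, whose total is exactly `s₀⁻¹`.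
Every edge `i → i + 1` of the chain carries the same probability flux
`w_i T_{i→i+1} = w_{i+1} T_{i+1→i} = μ_{AB}`, which is detailed balance.
-/

open Finset

/-- Stationary distribution of the neutral boundary-mutation Moran process with
asymmetric mutation rates μ_{AB} and μ_{BA} = k·μ_{AB}. -/
noncomputable def moranAsymStat (N : ℕ) (μAB k : ℝ) (j : ℕ) : ℝ :=
  if j = 0 then
    (1 + μAB * (N : ℝ) ^ 2 * (∑ i ∈ Ico 1 N, 1 / ((i : ℝ) * ((N : ℝ) - i))) + 1 / k)⁻¹
  else if j = N then
    (1 + μAB * (N : ℝ) ^ 2 * (∑ i ∈ Ico 1 N, 1 / ((i : ℝ) * ((N : ℝ) - i))) + 1 / k)⁻¹ / k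
  else
    (1 + μAB * (N : ℝ) ^ 2 * (∑ i ∈ Ico 1 N, 1 / ((i : ℝ) * ((N : ℝ) - i))) + 1 / k)⁻¹
      * (μAB * (N : ℝ) ^ 2 / ((j : ℝ) * ((N : ℝ) - j)))

/-- Up-transition T_{i→i+1}: μ_{AB} at i = 0, i(N-i)/N² for 1 ≤ i ≤ N-1. -/
noncomputable def moranAsymUp (N : ℕ) (μAB k : ℝ) (i : ℕ) : ℝ :=
  if i = 0 then μAB else (i : ℝ) * ((N : ℝ) - i) / (N : ℝ) ^ 2

/-- Down-transition T_{i→i-1}: k·μ_{AB} at i = N, i(N-i)/N² for 1 ≤ i ≤ N-1. -/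
noncomputable def moranAsymDown (N : ℕ) (μAB k : ℝ) (i : ℕ) : ℝ :=
  if i = N then k * μAB else (i : ℝ) * ((N : ℝ) - i) / (N : ℝ) ^ 2

noncomputable def moranAsymWeight (N : ℕ) (μAB k : ℝ) (j : ℕ) : ℝ :=
  if j = 0 then 1
  else if j = N then 1 / k
  else μAB * (N : ℝ) ^ 2 / ((j : ℝ) * ((N : ℝ) - j))

section

variable {N : ℕ} {μAB k : ℝ}

lemma moranAsymWeight_mul_interior {j : ℕ} (hj0 : 0 < j) (hjN : j < N) :
    moranAsymWeight N μAB k j * ((j : ℝ) * ((N : ℝ) - j) / (N : ℝ) ^ 2) = μAB := by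
  have hj : (0 : ℝ) < j := by exact_mod_cast hj0
  have hNj : (0 : ℝ) < (N : ℝ) - j := sub_pos.mpr (by exact_mod_cast hjN)
  have hN : (N : ℝ) ≠ 0 := (hj.trans (by exact_mod_cast hjN)).ne'
  rw [moranAsymWeight, if_neg hj0.ne', if_neg hjN.ne]
  field_simp

lemma moranAsymWeight_mul_up {i : ℕ} (hi : i < N) :
    moranAsymWeight N μAB k i * moranAsymUp N μAB k i = μAB := by
  rcases Nat.eq_zero_or_pos i with rfl | hi0
  · simp [moranAsymWeight, moranAsymUp]
  · rw [moranAsymUp, if_neg hi0.ne', moranAsymWeight_mul_interior hi0 hi]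

lemma moranAsymWeight_mul_down {i : ℕ} (hi0 : 0 < i) (hiN : i ≤ N) (hk : k ≠ 0) :
    moranAsymWeight N μAB k i * moranAsymDown N μAB k i = μAB := by
  rcases hiN.lt_or_eq with hiN | rfl
  · rw [moranAsymDown, if_neg hiN.ne, moranAsymWeight_mul_interior hi0 hiN]
  · simp [moranAsymWeight, moranAsymDown, hi0.ne', hk]

lemma sum_moranAsymWeight (hN : 0 < N) :
    ∑ j ∈ range (N + 1), moranAsymWeight N μAB k j
      = 1 + μAB * (N : ℝ) ^ 2 * (∑ i ∈ Ico 1 N, 1 / ((i : ℝ) * ((N : ℝ) - i))) + 1 / k := by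
  have hinterior : ∀ j ∈ Ico 1 N, moranAsymWeight N μAB k j
      = μAB * (N : ℝ) ^ 2 * (1 / ((j : ℝ) * ((N : ℝ) - j))) := by
    intro j hj
    rw [mem_Ico] at hj
    rw [moranAsymWeight, if_neg (by omega), if_neg (by omega), mul_one_div]
  rw [sum_range_succ, range_eq_Ico, sum_eq_sum_Ico_succ_bot hN, sum_congr rfl hinterior,
    ← mul_sum]
  simp [moranAsymWeight, hN.ne']

lemma moranAsymStat_eq_inv_sum_mul_weight (hN : 0 < N) (j : ℕ) :
    moranAsymStat N μAB k j
      = (∑ i ∈ range (N + 1), moranAsymWeight N μAB k i)⁻¹ * moranAsymWeight N μAB k j := by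
  rw [sum_moranAsymWeight hN, moranAsymStat, moranAsymWeight]
  split_ifs <;> ring

lemma sum_moranAsymWeight_pos (hN : 0 < N) (hμ : 0 ≤ μAB) (hk : 0 < k) :
    0 < ∑ j ∈ range (N + 1), moranAsymWeight N μAB k j := by
  have hS : 0 ≤ ∑ i ∈ Ico 1 N, 1 / ((i : ℝ) * ((N : ℝ) - i)) := by
    refine sum_nonneg fun i hi => ?_
    have hiN : (i : ℝ) ≤ N := by exact_mod_cast (mem_Ico.mp hi).2.le
    have : 0 ≤ (i : ℝ) * ((N : ℝ) - i) := mul_nonneg i.cast_nonneg (sub_nonneg.mpr hiN)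
    positivity
  rw [sum_moranAsymWeight hN]
  positivity

end

theorem moranAsym_stationary_general (N : ℕ) (hN : 2 ≤ N) (μAB k : ℝ)
    (hμ : μAB ∈ Set.Ioo (0 : ℝ) 1) (hk : 0 < k) :
    (∑ j ∈ range (N + 1), moranAsymStat N μAB k j) = 1 ∧
    (∀ i < N, moranAsymStat N μAB k i * moranAsymUp N μAB k i
        = moranAsymStat N μAB k (i + 1) * moranAsymDown N μAB k (i + 1)) := by
  have hN0 : 0 < N := by omega
  have hZ := sum_moranAsymWeight_pos hN0 hμ.1.le hk
  simp only [moranAsymStat_eq_inv_sum_mul_weight hN0]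
  refine ⟨by rw [← mul_sum, inv_mul_cancel₀ hZ.ne'], fun i hi => ?_⟩
  rw [mul_assoc, mul_assoc, moranAsymWeight_mul_up hi,
    moranAsymWeight_mul_down i.succ_pos hi hk.ne']

theorem moranAsym_stationary (N : ℕ) (hN : 2 ≤ N) (μAB k : ℝ)
    (hμ : μAB ∈ Set.Ioo (0 : ℝ) 1) (hk : 0 < k) (hkμ : k * μAB ∈ Set.Ioo (0 : ℝ) 1) :
    (∑ j ∈ range (N + 1), moranAsymStat N μAB k j) = 1 ∧
    (∀ i < N, moranAsymStat N μAB k i * moranAsymUp N μAB k i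
        = moranAsymStat N μAB k (i + 1) * moranAsymDown N μAB k (i + 1)) :=
  moranAsym_stationary_general N hN μAB k hμ hk
end
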